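/- arXiv:1401.0157 — 2 statements merged into one kernel-verified Lean document; each statement's English description precedes it below -/
import Mathlib

section
/- For every n ≥ 2, the submonoid of the monoid of transformations of Q_n = {0,…,n−1} generated by the unitary transformations (q→q+1) and (q+1→q) for 0 ≤ q ≤ n−3, the unitary transformations (q→n−1) for 0 ≤ q ≤ n−2, and the identity, is equal to the set of all partially monotonic transformations of Q_n, i.e., all t with t(n−1) = n−1 such that for all p ≤ q with p, q < n−1, if t(p) < n−1 and t(q) < n−1 then t(p) ≤ t(q). -/
def unitaryT {Q : Type*} [DecidableEq Q] (p q : Q) : Function.End Q :=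
  fun r => if r = p then q else r

def PartiallyMonotonic {n : ℕ} (f : Fin n → Fin n) : Prop :=
  (∀ q : Fin n, (q : ℕ) = n - 1 → f q = q) ∧
  ∀ p q : Fin n, p ≤ q → (p : ℕ) < n - 1 → (q : ℕ) < n - 1 →
    (f p : ℕ) < n - 1 → (f q : ℕ) < n - 1 → f p ≤ f q

/-!
The partially monotonic maps form a submonoid containing the generators. Conversely, if a
partially monotonic `f` sends some `p < n - 1` to `n - 1`, then `f = f' ∘ (p → n - 1)`, where `f'`
sends `p` to the largest value `< n - 1` that `f` takes to the left of `p`; `f'` is again partially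
monotonic and sends one point fewer to `n - 1`. This leaves the monotone maps that fix `n - 1` and
preserve `[0, n - 1)`. If such a map `g ≠ id` moves some point down, let `i` be the largest one;
then `g = (g i + 1 → g i) ∘ g'`, where `g'` is `g` with `g i` raised by one, which is still
monotone and has smaller total displacement `∑ |g j - j|`. Symmetrically, if some point moves up,
lower the value at the smallest one.
-/

open Function Finset

section General

variable {α β : Type*}

theorem unitaryT_apply [DecidableEq α] (p q r : α) :
    unitaryT p q r = if r = p then q else r :=
  rfl

theorem unitaryT_comp_update [DecidableEq α] [DecidableEq β] {g : α → β} {i : α} {c : β}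
    (hc : ∀ j ≠ i, g j ≠ c) : unitaryT c (g i) ∘ update g i c = g := by
  funext j
  change unitaryT c (g i) (update g i c j) = g j
  rcases eq_or_ne j i with rfl | hj
  · simp [unitaryT_apply]
  · simp [unitaryT_apply, hj, hc j hj]

theorem update_comp_unitaryT [DecidableEq α] {f : α → α} {i r : α} (w : α) (hr : r ≠ i)
    (h : f r = f i) : update f i w ∘ unitaryT i r = f := by
  funext j
  change update f i w (unitaryT i r j) = f j
  rcases eq_or_ne j i with rfl | hj
  · simp [unitaryT_apply, hr, h]
  · simp [unitaryT_apply, hj]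

theorem monotone_unitaryT [LinearOrder α] {a b : α} (h : a ⋖ b ∨ b ⋖ a) :
    Monotone (unitaryT a b) := by
  intro x y hxy
  rw [unitaryT_apply, unitaryT_apply]
  split_ifs with hx hy hy
  · exact le_rfl
  · have hay : a < y := (hx ▸ hxy).lt_of_ne (Ne.symm hy)
    rcases h with h | h
    · exact h.ge_of_gt hay
    · exact (h.lt.trans hay).le
  · have hxa : x < a := (hy ▸ hxy).lt_of_ne hx
    rcases h with h | h
    · exact (hxa.trans h.lt).le
    · exact h.le_of_lt hxa
  · exact hxy

theorem MonotoneOn.update_insert [LinearOrder α] [Preorder β] [DecidableEq α] {g : α → β}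
    {s : Set α} (hg : MonotoneOn g s) {i : α} {c : β} (hlo : ∀ j ∈ s, j < i → g j ≤ c)
    (hhi : ∀ j ∈ s, i < j → c ≤ g j) : MonotoneOn (update g i c) (insert i s) := by
  intro x hx y hy hxy
  replace hx := Set.mem_insert_iff.mp hx
  replace hy := Set.mem_insert_iff.mp hy
  by_cases hxi : x = i <;> by_cases hyi : y = i
  · simp [hxi, hyi]
  · subst hxi
    simpa [hyi] using hhi y (hy.resolve_left hyi) (hxy.lt_of_ne (Ne.symm hyi))
  · subst hyi
    simpa [hxi] using hlo x (hx.resolve_left hxi) (hxy.lt_of_ne hxi)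
  · simpa [hxi, hyi] using hg (hx.resolve_left hxi) (hy.resolve_left hyi) hxy

theorem Monotone.update_of_lt_of_lt [LinearOrder α] [Preorder β] [DecidableEq α] {g : α → β}
    (hg : Monotone g) {i : α} {c : β} (hlo : ∀ j < i, g j < c) (hhi : ∀ j, i < j → c < g j) :
    Monotone (update g i c) := by
  have := (hg.monotoneOn Set.univ).update_insert (i := i) (c := c)
    (fun j _ hj => (hlo j hj).le) (fun j _ hj => (hhi j hj).le)
  simpa using this

end General

section Adjacent

variable {n k : ℕ}

def adjacentUnitaries (n k : ℕ) : Set (Function.End (Fin n)) :=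
  {f | ∃ p q : Fin n, (q : ℕ) = (p : ℕ) + 1 ∧ (q : ℕ) < k ∧
    (f = unitaryT p q ∨ f = unitaryT q p)}

def MonotoneBelow (k : ℕ) (g : Fin n → Fin n) : Prop :=
  Monotone g ∧ (∀ i : Fin n, (i : ℕ) < k → (g i : ℕ) < k) ∧ ∀ i : Fin n, k ≤ (i : ℕ) → g i = i

def displacement (g : Fin n → Fin n) : ℕ :=
  ∑ i, Nat.dist (g i) i

theorem displacement_update_lt {g : Fin n → Fin n} {i c : Fin n}
    (h : Nat.dist c i < Nat.dist (g i) i) : displacement (update g i c) < displacement g := by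
  refine Finset.sum_lt_sum (fun j _ => ?_) ⟨i, mem_univ i, by simpa using h⟩
  rcases eq_or_ne j i with rfl | hj
  · simpa using h.le
  · simp [hj]

theorem MonotoneBelow.update {g : Fin n → Fin n} (hg : MonotoneBelow k g) {i c : Fin n}
    (hi : (i : ℕ) < k) (hc : (c : ℕ) < k) (hlo : ∀ j < i, g j < c)
    (hhi : ∀ j, i < j → c < g j) : MonotoneBelow k (update g i c) := by
  refine ⟨hg.1.update_of_lt_of_lt hlo hhi, fun j hj => ?_, fun j hj => ?_⟩
  · rcases eq_or_ne j i with rfl | hji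
    · simpa using hc
    · simpa [hji] using hg.2.1 j hj
  · have hji : j ≠ i := by rintro rfl; omega
    simpa [hji] using hg.2.2 j hj

theorem MonotoneBelow.mem_closure_of_update {g : Fin n → Fin n} (hg : MonotoneBelow k g)
    {i c : Fin n} (hadj : (c : ℕ) = g i + 1 ∨ (g i : ℕ) = c + 1) (hi : (i : ℕ) < k)
    (hc : (c : ℕ) < k) (hlo : ∀ j < i, g j < c) (hhi : ∀ j, i < j → c < g j)
    (hupd : Function.update g i c ∈ Submonoid.closure (adjacentUnitaries n k)) :
    g ∈ Submonoid.closure (adjacentUnitaries n k) := by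
  have hgen : unitaryT c (g i) ∈ adjacentUnitaries n k := by
    rcases hadj with hadj | hadj
    · exact ⟨g i, c, hadj, hc, Or.inr rfl⟩
    · exact ⟨c, g i, hadj, hg.2.1 i hi, Or.inl rfl⟩
  have hfactor : unitaryT c (g i) ∘ Function.update g i c = g :=
    unitaryT_comp_update fun j hj => by
      rcases hj.lt_or_gt with hj | hj
      exacts [(hlo j hj).ne, (hhi j hj).ne']
  rw [← hfactor]
  exact Submonoid.mul_mem (M := Function.End (Fin n)) _ (Submonoid.subset_closure hgen) hupd

theorem MonotoneBelow.mem_closure_of_lt {g : Fin n → Fin n} (hg : MonotoneBelow k g)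
    (h : ∃ i, g i < i)
    (ih : ∀ g', MonotoneBelow k g' → displacement g' < displacement g →
      g' ∈ Submonoid.closure (adjacentUnitaries n k)) :
    g ∈ Submonoid.closure (adjacentUnitaries n k) := by
  obtain ⟨i, hi, hmax⟩ := (univ.filter fun i => g i < i).exists_max_image id
    (by simpa [Finset.Nonempty] using h)
  simp only [mem_filter, mem_univ, true_and, id] at hi hmax
  have hik : (i : ℕ) < k := by
    by_contra hki
    exact hi.ne (hg.2.2 i (not_lt.1 hki))
  rw [Fin.lt_def] at hi
  let c : Fin n := ⟨g i + 1, by omega⟩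
  have hlo : ∀ j < i, g j < c := fun j hj => by
    have := hg.1 hj.le
    rw [Fin.le_def] at this
    rw [Fin.lt_def]; simp only [c]; omega
  have hhi : ∀ j, i < j → c < g j := fun j hj => by
    have := mt (hmax j) (not_le.2 hj)
    rw [Fin.lt_def] at hj this ⊢; simp only [c]; omega
  exact hg.mem_closure_of_update (Or.inl rfl) hik (by simp only [c]; omega) hlo hhi
    (ih _ (hg.update hik (by simp only [c]; omega) hlo hhi)
      (displacement_update_lt (by simp only [c, Nat.dist]; omega)))

theorem MonotoneBelow.mem_closure_of_gt {g : Fin n → Fin n} (hg : MonotoneBelow k g)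
    (h : ∃ i, i < g i)
    (ih : ∀ g', MonotoneBelow k g' → displacement g' < displacement g →
      g' ∈ Submonoid.closure (adjacentUnitaries n k)) :
    g ∈ Submonoid.closure (adjacentUnitaries n k) := by
  obtain ⟨i, hi, hmin⟩ := (univ.filter fun i => i < g i).exists_min_image id
    (by simpa [Finset.Nonempty] using h)
  simp only [mem_filter, mem_univ, true_and, id] at hi hmin
  have hik : (i : ℕ) < k := by
    by_contra hki
    exact hi.ne' (hg.2.2 i (not_lt.1 hki))
  have hgik := hg.2.1 i hik
  rw [Fin.lt_def] at hi
  let c : Fin n := ⟨g i - 1, by omega⟩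
  have hlo : ∀ j < i, g j < c := fun j hj => by
    have := mt (hmin j) (not_le.2 hj)
    rw [Fin.lt_def] at hj this ⊢; simp only [c]; omega
  have hhi : ∀ j, i < j → c < g j := fun j hj => by
    have := hg.1 hj.le
    rw [Fin.le_def] at this
    rw [Fin.lt_def]; simp only [c]; omega
  exact hg.mem_closure_of_update (Or.inr (by simp only [c]; omega)) hik (by simp only [c]; omega)
    hlo hhi (ih _ (hg.update hik (by simp only [c]; omega) hlo hhi)
      (displacement_update_lt (by simp only [c, Nat.dist]; omega)))

theorem MonotoneBelow.mem_closure_adjacentUnitaries {g : Fin n → Fin n}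
    (hg : MonotoneBelow k g) : g ∈ Submonoid.closure (adjacentUnitaries n k) := by
  induction hd : displacement g using Nat.strong_induction_on generalizing g with
  | _ d ih =>
  have ih' : ∀ g', MonotoneBelow k g' → displacement g' < displacement g →
      g' ∈ Submonoid.closure (adjacentUnitaries n k) :=
    fun g' hg' hlt => ih _ (hd ▸ hlt) hg' rfl
  by_cases hid : ∀ i, g i = i
  · obtain rfl : g = id := funext hid
    exact Submonoid.one_mem (M := Function.End (Fin n)) _
  obtain ⟨i, hi⟩ := not_forall.1 hid
  rcases Ne.lt_or_gt hi with hi | hi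
  exacts [hg.mem_closure_of_lt ⟨i, hi⟩ ih', hg.mem_closure_of_gt ⟨i, hi⟩ ih']

end Adjacent

section PartiallyMonotonic

variable {n : ℕ}

def deletionUnitaries (n : ℕ) : Set (Function.End (Fin n)) :=
  {f | ∃ p r : Fin n, (p : ℕ) < n - 1 ∧ (r : ℕ) = n - 1 ∧ f = unitaryT p r}

theorem partiallyMonotonic_iff {f : Fin n → Fin n} :
    PartiallyMonotonic f ↔ (∀ q : Fin n, (q : ℕ) = n - 1 → f q = q) ∧
      MonotoneOn f {p | (p : ℕ) < n - 1 ∧ (f p : ℕ) < n - 1} :=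
  and_congr_right fun _ =>
    ⟨fun h x hx y hy hxy => h x y hxy hx.1 hy.1 hx.2 hy.2,
      fun h _ _ hxy hx hy hfx hfy => h ⟨hx, hfx⟩ ⟨hy, hfy⟩ hxy⟩

theorem PartiallyMonotonic.lt_of_apply_lt {f : Fin n → Fin n} (hf : PartiallyMonotonic f)
    {p : Fin n} (h : (f p : ℕ) < n - 1) : (p : ℕ) < n - 1 := by
  by_contra hp
  have := hf.1 p (by omega)
  omega

theorem PartiallyMonotonic.comp {f g : Fin n → Fin n} (hf : PartiallyMonotonic f)
    (hg : PartiallyMonotonic g) : PartiallyMonotonic (f ∘ g) := by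
  refine ⟨fun q hq => by simp [hg.1 q hq, hf.1 q hq], fun p q hpq hp hq hfp hfq => ?_⟩
  have hgp := hf.lt_of_apply_lt hfp
  have hgq := hf.lt_of_apply_lt hfq
  exact hf.2 _ _ (hg.2 p q hpq hp hq hgp hgq) hgp hgq hfp hfq

def partiallyMonotonicSubmonoid (n : ℕ) : Submonoid (Function.End (Fin n)) where
  carrier := {f | PartiallyMonotonic f}
  mul_mem' hf hg := hf.comp hg
  one_mem' := ⟨fun _ _ => rfl, fun _ _ hpq _ _ _ _ => hpq⟩

theorem MonotoneBelow.partiallyMonotonic {g : Fin n → Fin n} (hg : MonotoneBelow (n - 1) g) :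
    PartiallyMonotonic g :=
  ⟨fun q hq => hg.2.2 q hq.ge, fun _ _ hpq _ _ _ _ => hg.1 hpq⟩

theorem monotoneBelow_unitaryT {k : ℕ} {a b : Fin n} (hab : a ⋖ b ∨ b ⋖ a) (ha : (a : ℕ) < k)
    (hb : (b : ℕ) < k) : MonotoneBelow k (unitaryT a b) := by
  refine ⟨monotone_unitaryT hab, fun i hi => ?_, fun i hi => ?_⟩
  · rw [unitaryT_apply]
    split_ifs <;> assumption
  · rw [unitaryT_apply, if_neg]
    rintro rfl
    omega

theorem partiallyMonotonic_unitaryT {p r : Fin n} (hp : (p : ℕ) < n - 1) (hr : (r : ℕ) = n - 1) :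
    PartiallyMonotonic (unitaryT p r) := by
  have hne : ∀ q : Fin n, ((unitaryT p r q : Fin n) : ℕ) < n - 1 → q ≠ p := by
    rintro q hq rfl
    simp [unitaryT_apply, hr] at hq
  refine ⟨fun q hq => ?_, fun x y hxy _ _ hx hy => ?_⟩
  · rw [unitaryT_apply, if_neg]
    rintro rfl
    omega
  · simpa [unitaryT_apply, hne x hx, hne y hy] using hxy

theorem closure_le_partiallyMonotonicSubmonoid :
    Submonoid.closure (adjacentUnitaries n (n - 1) ∪ deletionUnitaries n) ≤
      partiallyMonotonicSubmonoid n := by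
  refine Submonoid.closure_le.2 (Set.union_subset ?_ ?_)
  · rintro f ⟨p, q, hpq, hq, rfl | rfl⟩
    all_goals
      have hcov : p ⋖ q := by simp [Fin.covBy_iff, hpq]
      have hp : (p : ℕ) < n - 1 := by omega
    exacts [(monotoneBelow_unitaryT (Or.inl hcov) hp hq).partiallyMonotonic,
      (monotoneBelow_unitaryT (Or.inr hcov) hq hp).partiallyMonotonic]
  · rintro f ⟨p, r, hp, hr, rfl⟩
    exact partiallyMonotonic_unitaryT hp hr

def deletedPoints (f : Fin n → Fin n) : Finset (Fin n) :=
  univ.filter fun p => (p : ℕ) < n - 1 ∧ (f p : ℕ) = n - 1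

theorem PartiallyMonotonic.monotoneBelow {f : Fin n → Fin n} (hf : PartiallyMonotonic f)
    (h : deletedPoints f = ∅) : MonotoneBelow (n - 1) f := by
  have hlt : ∀ p : Fin n, (p : ℕ) < n - 1 → (f p : ℕ) < n - 1 := fun p hp => by
    have hfp := (f p).isLt
    have : p ∉ deletedPoints f := h ▸ Finset.notMem_empty p
    simp only [deletedPoints, mem_filter, mem_univ, true_and, not_and] at this
    have := this hp
    omega
  refine ⟨fun x y hxy => ?_, hlt, fun i hi => hf.1 i (by omega)⟩
  by_cases hy : (y : ℕ) < n - 1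
  · exact hf.2 x y hxy (lt_of_le_of_lt hxy hy) hy (hlt x (lt_of_le_of_lt hxy hy)) (hlt y hy)
  · rw [hf.1 y (by omega), Fin.le_def]
    omega

theorem PartiallyMonotonic.exists_update {f : Fin n → Fin n} (hf : PartiallyMonotonic f)
    {p : Fin n} (hp : (p : ℕ) < n - 1) :
    ∃ w : Fin n, (w : ℕ) < n - 1 ∧ PartiallyMonotonic (update f p w) := by
  obtain ⟨hfix, hmono⟩ := partiallyMonotonic_iff.1 hf
  set s : Finset (Fin n) := univ.filter fun q => q < p ∧ (f q : ℕ) < n - 1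
  have hsup : s.sup (fun q => (f q : ℕ)) < n - 1 :=
    (Finset.sup_lt_iff (by simp only [Nat.bot_eq_zero]; omega)).2 fun q hq => (mem_filter.1 hq).2.2
  let w : Fin n := ⟨s.sup fun q => (f q : ℕ), by omega⟩
  refine ⟨w, hsup, partiallyMonotonic_iff.2 ⟨fun q hq => ?_, ?_⟩⟩
  · have hqp : q ≠ p := by rintro rfl; omega
    simpa [hqp] using hfix q hq
  have hdom : {q : Fin n | (q : ℕ) < n - 1 ∧ ((update f p w q : Fin n) : ℕ) < n - 1} =
      insert p {q : Fin n | (q : ℕ) < n - 1 ∧ (f q : ℕ) < n - 1} := by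
    ext q
    rcases eq_or_ne q p with rfl | hqp
    · simpa using ⟨hp, hsup⟩
    · simp [hqp]
  rw [hdom]
  refine hmono.update_insert (fun j hj hjp => ?_) (fun j hj hpj => ?_)
  · rw [Fin.le_def]
    exact Finset.le_sup (f := fun q => (f q : ℕ)) (mem_filter.2 ⟨mem_univ j, hjp, hj.2⟩)
  · change s.sup (fun q => (f q : ℕ)) ≤ f j
    refine Finset.sup_le fun q hq => Fin.le_def.1 ?_
    obtain ⟨-, hqp, hfq⟩ := mem_filter.1 hq
    exact hmono ⟨by omega, hfq⟩ hj (hqp.trans hpj).le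

theorem deletedPoints_update_ssubset {f : Fin n → Fin n} {p w : Fin n}
    (hp : p ∈ deletedPoints f) (hw : (w : ℕ) < n - 1) :
    deletedPoints (update f p w) ⊂ deletedPoints f := by
  refine (ssubset_iff_of_subset fun q hq => ?_).2 ⟨p, hp, by simp [deletedPoints, hw.ne]⟩
  rcases eq_or_ne q p with rfl | hqp
  · exact hp
  · simpa [deletedPoints, hqp] using hq

theorem PartiallyMonotonic.mem_closure {f : Fin n → Fin n} (hf : PartiallyMonotonic f) :
    f ∈ Submonoid.closure (adjacentUnitaries n (n - 1) ∪ deletionUnitaries n) := by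
  induction hd : (deletedPoints f).card using Nat.strong_induction_on generalizing f with
  | _ d ih =>
  rcases (deletedPoints f).eq_empty_or_nonempty with h | ⟨p, hp⟩
  · exact Submonoid.closure_mono (M := Function.End (Fin n)) Set.subset_union_left
      (hf.monotoneBelow h).mem_closure_adjacentUnitaries
  obtain ⟨hpn, hfp⟩ : (p : ℕ) < n - 1 ∧ (f p : ℕ) = n - 1 := by simpa [deletedPoints] using hp
  obtain ⟨w, hw, hfw⟩ := hf.exists_update hpn
  have hfactor : update f p w ∘ unitaryT p (f p) = f :=
    update_comp_unitaryT w (fun h => by rw [← h] at hpn; omega) (hf.1 _ hfp)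
  rw [← hfactor]
  exact Submonoid.mul_mem (M := Function.End (Fin n)) _
    (ih _ (hd ▸ card_lt_card (deletedPoints_update_ssubset hp hw)) hfw rfl)
    (Submonoid.subset_closure (Or.inr ⟨p, f p, hpn, hfp, rfl⟩))

end PartiallyMonotonic

theorem statement5_general (n : ℕ) :
    (Submonoid.closure
        ({f : Function.End (Fin n) |
            ∃ p q : Fin n, (q : ℕ) = (p : ℕ) + 1 ∧ (q : ℕ) < n - 1 ∧
              (f = unitaryT p q ∨ f = unitaryT q p)} ∪
         {f : Function.End (Fin n) |
            ∃ p r : Fin n, (p : ℕ) < n - 1 ∧ (r : ℕ) = n - 1 ∧ f = unitaryT p r}) :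
        Set (Function.End (Fin n)))
      = {f : Function.End (Fin n) | PartiallyMonotonic f} :=
  Set.Subset.antisymm (fun _ hf => closure_le_partiallyMonotonicSubmonoid hf)
    fun _ hf => PartiallyMonotonic.mem_closure hf

/-- For every `n ≥ 2`, the submonoid of transformations of `Q_n = {0,…,n−1}`
generated by the unitary transformations `(q→q+1)` and `(q+1→q)` for `0 ≤ q ≤ n−3`,
the unitary transformations `(q→n−1)` for `0 ≤ q ≤ n−2`, and the identity, equals
the set of all partially monotonic transformations of `Q_n`. -/
theorem statement5 (n : ℕ) (hn : 2 ≤ n) :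
    (Submonoid.closure
        ({f : Function.End (Fin n) |
            ∃ p q : Fin n, (q : ℕ) = (p : ℕ) + 1 ∧ (q : ℕ) < n - 1 ∧
              (f = unitaryT p q ∨ f = unitaryT q p)} ∪
         {f : Function.End (Fin n) |
            ∃ p r : Fin n, (p : ℕ) < n - 1 ∧ (r : ℕ) = n - 1 ∧ f = unitaryT p r}) :
        Set (Function.End (Fin n)))
      = {f : Function.End (Fin n) | PartiallyMonotonic f} :=
  statement5_general n
end

section
/- Let Q be a finite set and T a set of unitary transformations of Q. If there exist pairwise distinct elements q0, q1, q2, q3 of Q such that T contains the six unitary transformations (q0→q1), (q1→q0), (q1→q2), (q1→q3), (q2→q1), (q3→q1), then the subsemigroup generated by T under composition is not aperiodic: it contains an element s such that s^(j+1) ≠ s^j for every j ≥ 1. -/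
section

variable {α : Type*}

@[simp]
lemma unitaryT_apply_self [DecidableEq α] (p q : α) : unitaryT p q p = q := if_pos rfl

@[simp]
lemma unitaryT_apply_of_ne [DecidableEq α] {p r : α} (q : α) (h : r ≠ p) :
    unitaryT p q r = r := if_neg h

lemma Function.End.mul_apply (f g : Function.End α) (x : α) : (f * g) x = f (g x) := rfl

lemma iterate_succ_apply_ne_of_swap {f : α → α} {a b : α} (hab : a ≠ b)
    (ha : f a = b) (hb : f b = a) (n : ℕ) : f^[n + 1] a ≠ f^[n] a := by
  induction n with
  | zero => simpa [ha] using hab.symm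
  | succ n ih =>
    have period : f^[n + 2] a = f^[n] a := by
      rw [Function.iterate_add_apply, Function.iterate_succ_apply, Function.iterate_one, ha, hb]
    rw [period]
    exact ih.symm

lemma Function.End.pow_succ_ne_pow_of_swap {f : Function.End α} {a b : α} (hab : a ≠ b)
    (ha : f a = b) (hb : f b = a) (n : ℕ) : f ^ (n + 1) ≠ f ^ n :=
  fun h => iterate_succ_apply_ne_of_swap hab ha hb n (congrFun h a)

end

theorem statement9_general {Q : Type*} [DecidableEq Q] (T : Set (Function.End Q))
    (q0 q1 q2 q3 : Q)
    (h01 : q0 ≠ q1) (h02 : q0 ≠ q2) (h03 : q0 ≠ q3)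
    (h12 : q1 ≠ q2) (h13 : q1 ≠ q3) (h23 : q2 ≠ q3)
    (m01 : unitaryT q0 q1 ∈ T) (m10 : unitaryT q1 q0 ∈ T)
    (m12 : unitaryT q1 q2 ∈ T) (m13 : unitaryT q1 q3 ∈ T)
    (m21 : unitaryT q2 q1 ∈ T) (m31 : unitaryT q3 q1 ∈ T) :
    ∃ s ∈ Subsemigroup.closure T, ∀ j : ℕ, 1 ≤ j → s ^ (j + 1) ≠ s ^ j := by
  set s : Function.End Q :=
    unitaryT q1 q0 * unitaryT q3 q1 * unitaryT q1 q2 * unitaryT q0 q1 *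
      unitaryT q1 q3 * unitaryT q2 q1
  have hs : s ∈ Subsemigroup.closure T := by
    open Subsemigroup in
    exact mul_mem (mul_mem (mul_mem (mul_mem (mul_mem (subset_closure m10) (subset_closure m31))
      (subset_closure m12)) (subset_closure m01)) (subset_closure m13)) (subset_closure m21)
  have hs0 : s q0 = q2 := by
    simp [s, Function.End.mul_apply, h01, h02, h12.symm, h23]
  have hs2 : s q2 = q0 := by
    simp [s, Function.End.mul_apply, h03.symm, h13.symm]
  exact ⟨s, hs, fun j _ => Function.End.pow_succ_ne_pow_of_swap h02 hs0 hs2 j⟩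

/-- If a set `T` of unitary transformations of a finite set `Q` contains the six
transformations `(q0→q1), (q1→q0), (q1→q2), (q1→q3), (q2→q1), (q3→q1)` for pairwise
distinct `q0, q1, q2, q3`, then the subsemigroup generated by `T` is not aperiodic:
it contains an element `s` with `s^(j+1) ≠ s^j` for every `j ≥ 1`. -/
theorem statement9 {Q : Type*} [Finite Q] [DecidableEq Q] (T : Set (Function.End Q))
    (hT : ∀ t ∈ T, ∃ p q : Q, p ≠ q ∧ t = unitaryT p q)
    (q0 q1 q2 q3 : Q)
    (h01 : q0 ≠ q1) (h02 : q0 ≠ q2) (h03 : q0 ≠ q3)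
    (h12 : q1 ≠ q2) (h13 : q1 ≠ q3) (h23 : q2 ≠ q3)
    (m01 : unitaryT q0 q1 ∈ T) (m10 : unitaryT q1 q0 ∈ T)
    (m12 : unitaryT q1 q2 ∈ T) (m13 : unitaryT q1 q3 ∈ T)
    (m21 : unitaryT q2 q1 ∈ T) (m31 : unitaryT q3 q1 ∈ T) :
    ∃ s ∈ Subsemigroup.closure T, ∀ j : ℕ, 1 ≤ j → s ^ (j + 1) ≠ s ^ j :=
  statement9_general T q0 q1 q2 q3 h01 h02 h03 h12 h13 h23 m01 m10 m12 m13 m21 m31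
end
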